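/- arXiv:1605.06911 — 3 statements merged into one kernel-verified Lean document; each statement's English description precedes it below -/
import Mathlib

section
/- Let {h_n : n ≥ 1} be a sequence of continuous monotone (non-decreasing) functions on [0,T] converging pointwise on [0,T] to a continuous function h_0, and let f be continuous on [0,T]. Then sup_{t∈[0,T]} |∫₀ᵗ f(s) dh_n(s) − ∫₀ᵗ f(s) dh_0(s)| → 0 as n → ∞. -/
/-!
Pointwise convergence of monotone functions to a continuous limit on a compact interval is
uniform (Pólya): between two consecutive nodes of a fine grid, monotonicity of `h n` and
uniform continuity of `h0` transfer the convergence at the nodes to every point.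

Uniform continuity of `f` lets one replace `∫_{(0,t]} f dh` by the Riemann–Stieltjes sum
`∑ f(xᵢ) (h(yᵢ₊₁) - h(yᵢ))` over the grid truncated at `t` (`yᵢ = min t xᵢ`),
with error `η (h t - h 0)`.
The sums for `h n` and `h0` differ by at most `2 k ‖f‖∞ sup |h n - h0|`, uniformly in `t`.
-/

open MeasureTheory Set Filter Topology

theorem exists_le_le_succ_of_le_of_le {α : Type*} [LinearOrder α] {x : ℕ → α} {k : ℕ}
    (hk : 0 < k) {s : α} (h0 : x 0 ≤ s) (hs : s ≤ x k) :
    ∃ i < k, x i ≤ s ∧ s ≤ x (i + 1) := by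
  induction k with
  | zero => omega
  | succ k ih =>
    by_cases hks : x k ≤ s
    · exact ⟨k, k.lt_succ_self, hks, hs⟩
    · obtain ⟨i, hik, hi⟩ := ih (Nat.pos_of_ne_zero fun hk0 => hks (hk0 ▸ h0)) (not_le.1 hks).le
      exact ⟨i, hik.trans k.lt_succ_self, hi⟩

theorem exists_monotone_grid {a b δ : ℝ} (hab : a ≤ b) (hδ : 0 < δ) :
    ∃ k : ℕ, 0 < k ∧ ∃ x : ℕ → ℝ,
      Monotone x ∧ x 0 = a ∧ x k = b ∧ ∀ i, x (i + 1) - x i ≤ δ := by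
  obtain ⟨k, hk⟩ := exists_nat_gt ((b - a) / δ)
  have hbk : b ≤ a + k * δ := by rw [div_lt_iff₀ hδ] at hk; linarith
  refine ⟨k, Nat.cast_pos.1 ((div_nonneg (sub_nonneg.2 hab) hδ.le).trans_lt hk),
    fun i => min b (a + i * δ), fun i j hij => ?_, by simpa using hab, min_eq_left hbk, fun i => ?_⟩
  · dsimp only
    gcongr
  · push_cast
    rw [min_def, min_def]
    split_ifs <;> linarith

theorem tendstoUniformlyOn_Icc_of_monotoneOn {ι : Type*} {l : Filter ι} {F : ι → ℝ → ℝ}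
    {f : ℝ → ℝ} {a b : ℝ} (hF : ∀ n, MonotoneOn (F n) (Icc a b))
    (hf : ContinuousOn f (Icc a b)) (hlim : ∀ t ∈ Icc a b, Tendsto (F · t) l (𝓝 (f t))) :
    TendstoUniformlyOn F f l (Icc a b) := by
  rcases lt_or_ge b a with hba | hab
  · rw [Icc_eq_empty_of_lt hba]
    exact tendstoUniformlyOn_empty
  rw [Metric.tendstoUniformlyOn_iff]
  intro ε hε
  obtain ⟨δ, hδ, hfδ⟩ := Metric.uniformContinuousOn_iff_le.1
    (isCompact_Icc.uniformContinuousOn_of_continuous hf) (ε / 2) (half_pos hε)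
  obtain ⟨k, hk, x, hx, hx0, hxk, hstep⟩ := exists_monotone_grid hab hδ
  have hxmem : ∀ i ≤ k, x i ∈ Icc a b := fun i hi => ⟨hx0 ▸ hx i.zero_le, hxk ▸ hx hi⟩
  have hnodes : ∀ᶠ n in l, ∀ i ∈ Finset.range (k + 1), dist (F n (x i)) (f (x i)) < ε / 2 := by
    rw [eventually_all_finset]
    exact fun i hi => (hlim _ (hxmem i (Finset.mem_range_succ_iff.1 hi))).eventually
      (Metric.ball_mem_nhds _ (half_pos hε))
  filter_upwards [hnodes] with n hn s hs
  obtain ⟨i, hik, hxs, hsx⟩ := exists_le_le_succ_of_le_of_le hk (hx0 ▸ hs.1) (hxk ▸ hs.2)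
  have hxi := hxmem i hik.le
  have hxi' := hxmem (i + 1) hik
  have hFl : F n (x i) ≤ F n s := hF n hxi hs hxs
  have hFr : F n s ≤ F n (x (i + 1)) := hF n hs hxi' hsx
  have hnl := hn i (Finset.mem_range.2 (by omega))
  have hnr := hn (i + 1) (Finset.mem_range.2 (by omega))
  have hfl := hfδ s hs (x i) hxi <| by
    rw [Real.dist_eq, abs_of_nonneg (sub_nonneg.2 hxs)]; linarith [hstep i]
  have hfr := hfδ (x (i + 1)) hxi' s hs <| by
    rw [Real.dist_eq, abs_of_nonneg (sub_nonneg.2 hsx)]; linarith [hstep i]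
  rw [Real.dist_eq, abs_sub_lt_iff] at hnl hnr ⊢
  rw [Real.dist_eq, abs_le] at hfl hfr
  constructor <;> linarith

theorem setIntegral_Ioc_eq_sum {E : Type*} [NormedAddCommGroup E] [NormedSpace ℝ E]
    {μ : Measure ℝ} {f : ℝ → E} {y : ℕ → ℝ} {k : ℕ} (hy : Monotone y)
    (hf : IntegrableOn f (Ioc (y 0) (y k)) μ) :
    ∫ s in Ioc (y 0) (y k), f s ∂μ =
      ∑ i ∈ Finset.range k, ∫ s in Ioc (y i) (y (i + 1)), f s ∂μ := by
  rw [← intervalIntegral.integral_of_le (hy k.zero_le),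
    ← intervalIntegral.sum_integral_adjacent_intervals]
  · exact Finset.sum_congr rfl fun i _ => intervalIntegral.integral_of_le (hy i.le_succ)
  · intro i hi
    refine (intervalIntegrable_iff_integrableOn_Ioc_of_le (hy i.le_succ)).2
      (hf.mono_set (Ioc_subset_Ioc (hy i.zero_le) (hy hi)))

theorem abs_setIntegral_Ioc_sub_sum_le {μ : Measure ℝ} [IsLocallyFiniteMeasure μ] {f : ℝ → ℝ}
    {y c : ℕ → ℝ} {k : ℕ} {ε : ℝ} (hy : Monotone y) (hf : IntegrableOn f (Ioc (y 0) (y k)) μ)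
    (hfc : ∀ i < k, ∀ s ∈ Ioc (y i) (y (i + 1)), |f s - c i| ≤ ε) :
    |∫ s in Ioc (y 0) (y k), f s ∂μ - ∑ i ∈ Finset.range k, c i * μ.real (Ioc (y i) (y (i + 1)))|
      ≤ ε * μ.real (Ioc (y 0) (y k)) := by
  have hpiece : ∀ i < k, IntegrableOn f (Ioc (y i) (y (i + 1))) μ := fun i hi =>
    hf.mono_set (Ioc_subset_Ioc (hy i.zero_le) (hy hi))
  have hmeasure :
      μ.real (Ioc (y 0) (y k)) = ∑ i ∈ Finset.range k, μ.real (Ioc (y i) (y (i + 1))) := by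
    simpa using setIntegral_Ioc_eq_sum (f := fun _ => (1 : ℝ)) hy
      (integrableOn_const measure_Ioc_lt_top.ne)
  rw [setIntegral_Ioc_eq_sum hy hf, hmeasure, ← Finset.sum_sub_distrib, Finset.mul_sum]
  refine (Finset.abs_sum_le_sum_abs _ _).trans (Finset.sum_le_sum fun i hi => ?_)
  have hik := Finset.mem_range.1 hi
  rw [mul_comm (c i), ← smul_eq_mul, ← setIntegral_const, ← integral_sub (hpiece i hik)
    (integrableOn_const measure_Ioc_lt_top.ne)]
  exact norm_setIntegral_le_of_norm_le_const (f := fun s => f s - c i) measure_Ioc_lt_top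
    (hfc i hik)

theorem StieltjesFunction.measureReal_Ioc (g : StieltjesFunction ℝ) {a b : ℝ} (hab : a ≤ b) :
    g.measure.real (Ioc a b) = g b - g a := by
  rw [measureReal_def, g.measure_Ioc, ENNReal.toReal_ofReal (sub_nonneg.2 (g.mono hab))]

theorem abs_sum_mul_sub_le {c u : ℕ → ℝ} {k : ℕ} {B D : ℝ} (hc : ∀ i < k, |c i| ≤ B)
    (hu : ∀ i ≤ k, |u i| ≤ D) :
    |∑ i ∈ Finset.range k, c i * (u (i + 1) - u i)| ≤ k * (B * (2 * D)) := by
  refine (Finset.abs_sum_le_sum_abs _ _).trans ?_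
  have hterm : ∀ i ∈ Finset.range k, |c i * (u (i + 1) - u i)| ≤ B * (2 * D) := by
    intro i hi
    have hik := Finset.mem_range.1 hi
    rw [abs_mul]
    refine mul_le_mul (hc i hik) ((abs_sub _ _).trans ?_) (abs_nonneg _)
      ((abs_nonneg _).trans (hc i hik))
    linarith [hu i hik.le, hu (i + 1) hik]
  simpa using Finset.sum_le_card_nsmul _ _ _ hterm

theorem StieltjesFunction.abs_setIntegral_Ioc_sub_sum_le (g : StieltjesFunction ℝ) {f : ℝ → ℝ}
    {y c : ℕ → ℝ} {k : ℕ} {ε : ℝ} (hy : Monotone y)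
    (hf : IntegrableOn f (Ioc (y 0) (y k)) g.measure)
    (hfc : ∀ i < k, ∀ s ∈ Ioc (y i) (y (i + 1)), |f s - c i| ≤ ε) :
    |∫ s in Ioc (y 0) (y k), f s ∂g.measure - ∑ i ∈ Finset.range k, c i * (g (y (i + 1)) - g (y i))|
      ≤ ε * (g (y k) - g (y 0)) := by
  rw [← g.measureReal_Ioc (hy k.zero_le),
    Finset.sum_congr rfl fun i _ => by rw [← g.measureReal_Ioc (hy i.le_succ)]]
  exact _root_.abs_setIntegral_Ioc_sub_sum_le hy hf hfc

theorem StieltjesFunction.abs_setIntegral_Ioc_sub_le {g g₀ : StieltjesFunction ℝ} {f : ℝ → ℝ}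
    {x : ℕ → ℝ} {k : ℕ} {a b t η B D : ℝ} (hx : Monotone x) (hx0 : x 0 = a) (hxk : x k = b)
    (hf : ContinuousOn f (Icc a b))
    (hfx : ∀ i < k, ∀ s ∈ Ioc (x i) (x (i + 1)), |f s - f (x i)| ≤ η)
    (hB : ∀ i < k, |f (x i)| ≤ B) (hD : ∀ s ∈ Icc a b, |g s - g₀ s| ≤ D) (ht : t ∈ Icc a b) :
    |∫ s in Ioc a t, f s ∂g.measure - ∫ s in Ioc a t, f s ∂g₀.measure| ≤
      η * ((g t - g a) + (g₀ t - g₀ a)) + k * (B * (2 * D)) := by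
  set y : ℕ → ℝ := fun i => min t (x i)
  have hy : Monotone y := fun i j hij => min_le_min_left t (hx hij)
  have hy0 : y 0 = a := by simp [y, hx0, ht.1]
  have hyk : y k = t := by simp [y, hxk, ht.2]
  have hymem : ∀ i, y i ∈ Icc a b :=
    fun i => ⟨le_min ht.1 (hx0 ▸ hx i.zero_le), (min_le_left _ _).trans ht.2⟩
  -- a piece of the truncated grid is empty or contained in the corresponding piece of `x`
  have hfy : ∀ i < k, ∀ s ∈ Ioc (y i) (y (i + 1)), |f s - f (x i)| ≤ η := fun i hi s hs =>
    hfx i hi s ⟨(min_lt_iff.1 hs.1).resolve_left (not_lt.2 (hs.2.trans (min_le_left _ _))),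
      hs.2.trans (min_le_right _ _)⟩
  have hint : ∀ μ : Measure ℝ, [IsLocallyFiniteMeasure μ] → IntegrableOn f (Ioc (y 0) (y k)) μ :=
    fun μ _ => hf.integrableOn_Icc.mono_set <|
      hy0 ▸ hyk ▸ Ioc_subset_Icc_self.trans (Icc_subset_Icc_right ht.2)
  have hg := g.abs_setIntegral_Ioc_sub_sum_le hy (hint _) hfy
  have hg₀ := g₀.abs_setIntegral_Ioc_sub_sum_le hy (hint _) hfy
  have hsum := abs_sum_mul_sub_le (u := fun i => g (y i) - g₀ (y i)) hB fun i _ => hD _ (hymem i)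
  rw [hy0, hyk] at hg hg₀
  have hdiff : ∑ i ∈ Finset.range k, f (x i) * (g (y (i + 1)) - g (y i)) -
      ∑ i ∈ Finset.range k, f (x i) * (g₀ (y (i + 1)) - g₀ (y i)) =
      ∑ i ∈ Finset.range k,
        f (x i) * ((g (y (i + 1)) - g₀ (y (i + 1))) - (g (y i) - g₀ (y i))) := by
    rw [← Finset.sum_sub_distrib]
    exact Finset.sum_congr rfl fun i _ => by ring
  rw [← hdiff] at hsum
  rw [abs_le] at hg hg₀ hsum ⊢
  constructor <;> linarith

theorem StieltjesFunction.tendstoUniformlyOn_setIntegral_Ioc {ι : Type*} {l : Filter ι}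
    {g : ι → StieltjesFunction ℝ} {g₀ : StieltjesFunction ℝ} {f : ℝ → ℝ} {a b : ℝ}
    (hf : ContinuousOn f (Icc a b)) (hg : TendstoUniformlyOn (fun i => ⇑(g i)) g₀ l (Icc a b)) :
    TendstoUniformlyOn (fun i t => ∫ s in Ioc a t, f s ∂(g i).measure)
      (fun t => ∫ s in Ioc a t, f s ∂g₀.measure) l (Icc a b) := by
  rcases lt_or_ge b a with hba | hab
  · rw [Icc_eq_empty_of_lt hba]
    exact tendstoUniformlyOn_empty
  rw [Metric.tendstoUniformlyOn_iff]
  intro ε hε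
  obtain ⟨B, hB⟩ := isCompact_Icc.exists_bound_of_continuousOn hf
  have hB0 : 0 ≤ B := (norm_nonneg _).trans (hB a ⟨le_rfl, hab⟩)
  set V := g₀ b - g₀ a
  have hV : 0 ≤ V := sub_nonneg.2 (g₀.mono hab)
  set η := ε / (4 * (V + 1))
  have hη : 0 < η := by positivity
  obtain ⟨δ, hδ, hfδ⟩ := Metric.uniformContinuousOn_iff_le.1
    (isCompact_Icc.uniformContinuousOn_of_continuous hf) η hη
  obtain ⟨k, -, x, hx, hx0, hxk, hstep⟩ := exists_monotone_grid hab hδ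
  have hxmem : ∀ i ≤ k, x i ∈ Icc a b := fun i hi => ⟨hx0 ▸ hx i.zero_le, hxk ▸ hx hi⟩
  have hfx : ∀ i < k, ∀ s ∈ Ioc (x i) (x (i + 1)), |f s - f (x i)| ≤ η := fun i hi s hs =>
    hfδ s ⟨(hxmem i hi.le).1.trans hs.1.le, hs.2.trans (hxmem (i + 1) hi).2⟩ (x i) (hxmem i hi.le)
      (by rw [Real.dist_eq, abs_of_pos (sub_pos.2 hs.1)]; linarith [hs.2, hstep i])
  set D := min 1 (ε / (8 * (k * B + 1)))
  have hD : 0 < D := lt_min one_pos (by positivity)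
  filter_upwards [Metric.tendstoUniformlyOn_iff.1 hg D hD] with i hi t ht
  have hgD : ∀ s ∈ Icc a b, |g i s - g₀ s| ≤ D := fun s hs => by
    simpa [Real.dist_eq, abs_sub_comm] using (hi s hs).le
  have hest := StieltjesFunction.abs_setIntegral_Ioc_sub_le hx hx0 hxk hf hfx
    (fun j hj => hB _ (hxmem j hj.le)) hgD ht
  have hvar : (g i t - g i a) + (g₀ t - g₀ a) ≤ 2 * (V + 1) := by
    have := hgD a ⟨le_rfl, hab⟩
    have := hgD b ⟨hab, le_rfl⟩
    rw [abs_le] at *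
    linarith [(g i).mono ht.2, g₀.mono ht.2, min_le_left 1 (ε / (8 * (k * B + 1)))]
  have hfirst : η * ((g i t - g i a) + (g₀ t - g₀ a)) ≤ ε / 2 :=
    (mul_le_mul_of_nonneg_left hvar hη.le).trans_eq (by simp only [η]; field_simp; ring)
  have hsecond : k * (B * (2 * D)) ≤ ε / 4 :=
    calc k * (B * (2 * D)) ≤ 2 * (k * B + 1) * (ε / (8 * (k * B + 1))) := by
          nlinarith [min_le_right 1 (ε / (8 * (k * B + 1))), mul_nonneg k.cast_nonneg hB0]
      _ = ε / 4 := by field_simp; ring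
  rw [dist_comm, Real.dist_eq]
  linarith

theorem TendstoUniformlyOn.tendsto_sSup_abs_sub {ι α : Type*} {l : Filter ι} {F : ι → α → ℝ}
    {G : α → ℝ} {S : Set α} (h : TendstoUniformlyOn F G l S) :
    Tendsto (fun i => sSup ((fun t => |F i t - G t|) '' S)) l (𝓝 0) := by
  rw [Metric.tendsto_nhds]
  intro ε hε
  filter_upwards [Metric.tendstoUniformlyOn_iff.1 h (ε / 2) (half_pos hε)] with i hi
  have hle : sSup ((fun t => |F i t - G t|) '' S) ≤ ε / 2 := by
    refine Real.sSup_le ?_ (half_pos hε).le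
    rintro _ ⟨t, ht, rfl⟩
    dsimp only
    rw [abs_sub_comm, ← Real.dist_eq]
    exact (hi t ht).le
  have hnonneg : 0 ≤ sSup ((fun t => |F i t - G t|) '' S) :=
    Real.sSup_nonneg (by rintro _ ⟨t, -, rfl⟩; exact abs_nonneg _)
  rw [Real.dist_eq, sub_zero, abs_of_nonneg hnonneg]
  linarith

theorem stieltjes_integral_convergence_general (T : ℝ) (f : ℝ → ℝ)
    (hf : ContinuousOn f (Icc 0 T))
    (h : ℕ → StieltjesFunction ℝ) (h0 : StieltjesFunction ℝ)
    (h0cont : Continuous h0)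
    (hconv : ∀ t ∈ Icc (0:ℝ) T, Tendsto (fun n => h n t) atTop (nhds (h0 t))) :
    Tendsto
      (fun n => sSup ((fun t => |(∫ s in Ioc 0 t, f s ∂(h n).measure) -
        ∫ s in Ioc 0 t, f s ∂h0.measure|) '' Icc (0:ℝ) T)) atTop (nhds 0) := by
  have hunif : TendstoUniformlyOn (fun n => ⇑(h n)) h0 atTop (Icc 0 T) :=
    tendstoUniformlyOn_Icc_of_monotoneOn (fun n => (h n).mono.monotoneOn _) h0cont.continuousOn
      hconv
  exact (StieltjesFunction.tendstoUniformlyOn_setIntegral_Ioc hf hunif).tendsto_sSup_abs_sub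

/-- Convergence of Stieltjes integrals of a continuous function against a sequence of
continuous monotone integrators converging pointwise to a continuous limit,
uniformly in the upper limit of integration. -/
theorem stieltjes_integral_convergence (T : ℝ) (hT : 0 < T) (f : ℝ → ℝ)
    (hf : ContinuousOn f (Icc 0 T))
    (h : ℕ → StieltjesFunction ℝ) (h0 : StieltjesFunction ℝ)
    (hcont : ∀ n, Continuous (h n)) (h0cont : Continuous h0)
    (hconv : ∀ t ∈ Icc (0:ℝ) T, Tendsto (fun n => h n t) atTop (nhds (h0 t))) :
    Tendsto
      (fun n => sSup ((fun t => |(∫ s in Ioc 0 t, f s ∂(h n).measure) -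
        ∫ s in Ioc 0 t, f s ∂h0.measure|) '' Icc (0:ℝ) T)) atTop (nhds 0) :=
  stieltjes_integral_convergence_general T f hf h h0 h0cont hconv
end

section
/- Let X, Y be complete separable metric spaces and (Ω, F, P) a probability space. Let ξ_n : Ω → X (n ≥ 0) be measurable maps with ξ_n → ξ_0 in probability P, and h_n : X → Y (n ≥ 0) be measurable maps with h_n → h_0 in measure ν, where ν is a probability measure on X. Assume that for each n ≥ 1 the distribution of ξ_n is absolutely continuous with respect to ν and the family of densities {dP_{ξ_n}/dν : n ≥ 1} is uniformly integrable with respect to ν. Then h_n(ξ_n) → h_0(ξ_0) in probability P. -/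
/-!
Split `dist (h n (ξ n)) (h 0 (ξ 0))` through `h 0 (ξ n)`. The laws of the `ξ n` are uniformly
absolutely continuous with respect to `ν`, so the first term is small outside
`ξ n ⁻¹' {x | ε ≤ dist (h n x) (h 0 x)}`, a set of small `ν`-measure pulled back by `ξ n`.
For the second term, Lusin's theorem for the tight measure `ν + P.map (ξ 0)` makes `h 0`
uniformly continuous on a compact set `K` whose complement is small both for `ν` (hence, uniformly
in `n`, for the law of `ξ n`) and for the law of `ξ 0`; outside these small events,
`dist (ξ n) (ξ 0)` small forces `dist (h 0 (ξ n)) (h 0 (ξ 0))` small.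
-/

open MeasureTheory Filter Topology TopologicalSpace
open scoped ENNReal

namespace MeasureTheory

section UniformAbsoluteContinuity

variable {ι α : Type*} [MeasurableSpace α]

def UniformlyAbsolutelyContinuous (μ : ι → Measure α) (ν : Measure α) : Prop :=
  ∀ ⦃ε : ℝ≥0∞⦄, 0 < ε → ∃ δ > 0, ∀ i s, MeasurableSet s → ν s ≤ δ → μ i s ≤ ε

theorem UnifIntegrable.uniformlyAbsolutelyContinuous {μ : ι → Measure α} {ν : Measure α}
    [∀ i, IsFiniteMeasure (μ i)] [SigmaFinite ν] (hac : ∀ i, μ i ≪ ν)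
    (hui : UnifIntegrable (fun i x => ((μ i).rnDeriv ν x).toReal) 1 ν) :
    UniformlyAbsolutelyContinuous μ ν := by
  intro ε hε
  obtain ⟨ε', -, hε'_pos, hε'⟩ := ENNReal.lt_iff_exists_real_btwn.1 hε
  obtain ⟨δ, hδ, hbound⟩ := hui (ENNReal.ofReal_pos.1 hε'_pos)
  refine ⟨ENNReal.ofReal δ, ENNReal.ofReal_pos.2 hδ, fun i s hs hνs => ?_⟩
  calc μ i s = ∫⁻ x in s, (μ i).rnDeriv ν x ∂ν := (Measure.setLIntegral_rnDeriv (hac i) s).symm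
    _ = eLpNorm (s.indicator fun x => ((μ i).rnDeriv ν x).toReal) 1 ν := by
      rw [eLpNorm_one_eq_lintegral_enorm, ← lintegral_indicator hs]
      refine lintegral_congr_ae ?_
      filter_upwards [Measure.rnDeriv_lt_top (μ i) ν] with x hx
      by_cases hxs : x ∈ s <;> simp [hxs, Real.enorm_toReal hx.ne]
    _ ≤ ENNReal.ofReal ε' := hbound i s hs hνs
    _ ≤ ε := hε'.le

theorem UniformlyAbsolutelyContinuous.tendsto_measure {μ : ι → Measure α} {ν : Measure α}
    (huac : UniformlyAbsolutelyContinuous μ ν) {l : Filter ι} {s : ι → Set α}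
    (hs : ∀ i, MeasurableSet (s i)) (hνs : Tendsto (fun i => ν (s i)) l (𝓝 0)) :
    Tendsto (fun i => μ i (s i)) l (𝓝 0) := by
  refine ENNReal.tendsto_nhds_zero.2 fun ε hε => ?_
  obtain ⟨δ, hδ, hsmall⟩ := huac hε
  filter_upwards [ENNReal.tendsto_nhds_zero.1 hνs δ hδ] with i hi using hsmall i _ (hs i) hi

end UniformAbsoluteContinuity

section Lusin

variable {X : Type*} [TopologicalSpace X] [T2Space X] [MeasurableSpace X]
  [OpensMeasurableSpace X] {μ : Measure X} [IsFiniteMeasure μ] [μ.InnerRegularCompactLTTop]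

theorem _root_.MeasurableSet.exists_isCompact_subset_isCompact_subset_compl {s : Set X}
    (hs : MeasurableSet s) {ε : ℝ≥0∞} (hε : ε ≠ 0) :
    ∃ F G, IsCompact F ∧ IsCompact G ∧ F ⊆ s ∧ G ⊆ sᶜ ∧ μ (F ∪ G)ᶜ < ε := by
  have hε2 : ε / 2 ≠ 0 := ENNReal.div_ne_zero.2 ⟨hε, ENNReal.ofNat_ne_top⟩
  obtain ⟨F, hFs, hF, hμF⟩ := hs.exists_isCompact_sdiff_lt (measure_ne_top μ s) hε2
  obtain ⟨G, hGs, hG, hμG⟩ := hs.compl.exists_isCompact_sdiff_lt (measure_ne_top μ sᶜ) hε2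
  refine ⟨F, G, hF, hG, hFs, hGs, ?_⟩
  have hcover : (F ∪ G)ᶜ ⊆ (s \ F) ∪ (sᶜ \ G) := fun x hx => by
    by_cases hxs : x ∈ s
    · exact Or.inl ⟨hxs, fun h => hx (Or.inl h)⟩
    · exact Or.inr ⟨hxs, fun h => hx (Or.inr h)⟩
  calc μ (F ∪ G)ᶜ ≤ μ (s \ F) + μ (sᶜ \ G) := (measure_mono hcover).trans (measure_union_le _ _)
    _ < ε / 2 + ε / 2 := ENNReal.add_lt_add hμF hμG
    _ = ε := ENNReal.add_halves ε

variable (μ) in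
/-- **Lusin's theorem**. -/
theorem _root_.Measurable.exists_isCompact_continuousOn_measure_compl_lt {Y : Type*}
    [TopologicalSpace Y] [SecondCountableTopology Y] [MeasurableSpace Y] [OpensMeasurableSpace Y]
    {f : X → Y} (hf : Measurable f) {ε : ℝ≥0∞} (hε : ε ≠ 0) :
    ∃ K, IsCompact K ∧ ContinuousOn f K ∧ μ Kᶜ < ε := by
  have hε2 : ε / 2 ≠ 0 := ENNReal.div_ne_zero.2 ⟨hε, ENNReal.ofNat_ne_top⟩
  obtain ⟨L, -, hL, hμL⟩ := MeasurableSet.univ.exists_isCompact_sdiff_lt (measure_ne_top μ _) hε2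
  have : Countable (countableBasis Y) := (countable_countableBasis Y).to_subtype
  obtain ⟨η, hη, hη_sum⟩ := ENNReal.exists_pos_sum_of_countable' hε2 (countableBasis Y)
  have hsep : ∀ U : countableBasis Y, ∃ F G, IsCompact F ∧ IsCompact G ∧ F ⊆ f ⁻¹' U ∧
      G ⊆ (f ⁻¹' U)ᶜ ∧ μ (F ∪ G)ᶜ < η U := fun U =>
    MeasurableSet.exists_isCompact_subset_isCompact_subset_compl
      (hf (isOpen_of_mem_countableBasis U.2).measurableSet) (hη U).ne'
  choose F G hF hG hFU hGU hμFG using hsep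
  refine ⟨L ∩ ⋂ U, (F U ∪ G U), hL.inter_right (isClosed_iInter fun U =>
    (hF U).isClosed.union (hG U).isClosed), ?_, ?_⟩
  -- Inside this set, `f ⁻¹' U` is the complement of the closed set `G U`.
  · rw [continuousOn_iff_continuous_domRestrict, (isBasis_countableBasis Y).continuous_iff]
    intro U hU
    convert (hG ⟨U, hU⟩).isClosed.isOpen_compl.preimage continuous_subtype_val using 1
    ext ⟨x, -, hxK⟩
    have hx := Set.mem_iInter.1 hxK ⟨U, hU⟩
    constructor
    · exact fun hxU hxG => hGU _ hxG hxU
    · exact fun hxG => hFU _ (hx.resolve_right hxG)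
  · rw [Set.compl_inter, Set.compl_iInter]
    calc μ (Lᶜ ∪ ⋃ U, (F U ∪ G U)ᶜ) ≤ μ Lᶜ + ∑' U, μ (F U ∪ G U)ᶜ :=
          (measure_union_le _ _).trans (by gcongr; exact measure_iUnion_le _)
      _ < ε / 2 + ε / 2 := by
          rw [Set.compl_eq_univ_sdiff]
          exact ENNReal.add_lt_add hμL
            ((ENNReal.tsum_le_tsum fun U => (hμFG U).le).trans_lt hη_sum)
      _ = ε := ENNReal.add_halves ε

end Lusin

section ConvergenceInMeasure

variable {ι α E : Type*} [MeasurableSpace α] {μ : Measure α} [PseudoMetricSpace E]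

theorem tendstoInMeasure_add_atTop_iff_nat {f : ℕ → α → E} {g : α → E} (k : ℕ) :
    TendstoInMeasure μ (fun n => f (n + k)) atTop g ↔ TendstoInMeasure μ f atTop g :=
  forall₂_congr fun ε _ =>
    tendsto_add_atTop_iff_nat (f := fun n => μ {x | ε ≤ edist (f n x) (g x)}) k

theorem TendstoInMeasure.of_tendsto_measure_dist {l : Filter ι} {f g : ι → α → E} {f₀ : α → E}
    (hf : TendstoInMeasure μ f l f₀)
    (hgf : ∀ ε > 0, Tendsto (fun i => μ {x | ε ≤ dist (g i x) (f i x)}) l (𝓝 0)) :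
    TendstoInMeasure μ g l f₀ := by
  rw [tendstoInMeasure_iff_dist] at hf ⊢
  intro ε hε
  have hsplit : ∀ i, {x | ε ≤ dist (g i x) (f₀ x)} ⊆
      {x | ε / 2 ≤ dist (g i x) (f i x)} ∪ {x | ε / 2 ≤ dist (f i x) (f₀ x)} := by
    intro i x hx
    by_contra hsmall
    simp only [Set.mem_union, Set.mem_ofPred_eq, not_or, not_le] at hsmall hx
    linarith [dist_triangle (g i x) (f i x) (f₀ x)]
  refine tendsto_of_tendsto_of_tendsto_of_le_of_le tendsto_const_nhds
    (by simpa using (hgf _ (half_pos hε)).add (hf _ (half_pos hε))) (fun _ => zero_le)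
    fun i => (measure_mono (hsplit i)).trans (measure_union_le _ _)

end ConvergenceInMeasure

section RandomElements

variable {ι Ω X Y : Type*} {l : Filter ι} [MeasurableSpace Ω] {P : Measure Ω} [MeasurableSpace X]
  {ν : Measure X} [PseudoMetricSpace Y] [SecondCountableTopology Y] [MeasurableSpace Y]
  [OpensMeasurableSpace Y] {ξ : ι → Ω → X}

theorem TendstoInMeasure.tendsto_measure_dist_comp {h : ι → X → Y} {g : X → Y}
    (hh_meas : ∀ i, Measurable (h i)) (hg : Measurable g) (hh : TendstoInMeasure ν h l g)
    (hξ_meas : ∀ i, AEMeasurable (ξ i) P)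
    (huac : UniformlyAbsolutelyContinuous (fun i => P.map (ξ i)) ν) :
    ∀ ε > 0, Tendsto (fun i => P {ω | ε ≤ dist (h i (ξ i ω)) (g (ξ i ω))}) l (𝓝 0) := by
  intro ε hε
  refine tendsto_of_tendsto_of_tendsto_of_le_of_le tendsto_const_nhds
    (huac.tendsto_measure (fun i => measurableSet_le measurable_const ((hh_meas i).dist hg))
      (tendstoInMeasure_iff_dist.1 hh ε hε)) (fun _ => zero_le)
    fun i => Measure.le_map_apply (hξ_meas i) {x | ε ≤ dist (h i x) (g x)}

theorem TendstoInMeasure.comp_of_uniformlyAbsolutelyContinuous [MetricSpace X] [CompleteSpace X]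
    [SecondCountableTopology X] [BorelSpace X] [IsFiniteMeasure P] [IsFiniteMeasure ν]
    {ξ₀ : Ω → X} (hξ_meas : ∀ i, AEMeasurable (ξ i) P) (hξ₀_meas : AEMeasurable ξ₀ P)
    {f : X → Y} (hf : Measurable f) (hξ : TendstoInMeasure P ξ l ξ₀)
    (huac : UniformlyAbsolutelyContinuous (fun i => P.map (ξ i)) ν) :
    TendstoInMeasure P (fun i => f ∘ ξ i) l (f ∘ ξ₀) := by
  rw [tendstoInMeasure_iff_dist] at hξ ⊢
  intro ε hε
  refine ENNReal.tendsto_nhds_zero.2 fun θ hθ => ?_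
  have hθ3 : 0 < θ / 3 := ENNReal.div_pos hθ.ne' ENNReal.ofNat_ne_top
  obtain ⟨δ, hδ, hsmall⟩ := huac hθ3
  obtain ⟨K, hK, hfK, hμK⟩ := hf.exists_isCompact_continuousOn_measure_compl_lt
    (ν + P.map ξ₀) (lt_min hδ hθ3).ne'
  obtain ⟨r, hr, hfr⟩ :=
    Metric.uniformContinuousOn_iff.1 (hK.uniformContinuousOn_of_continuous hfK) ε hε
  have hνK : ν Kᶜ ≤ δ := (le_self_add.trans hμK.le).trans (min_le_left _ _)
  have hξ₀K : P (ξ₀ ⁻¹' Kᶜ) ≤ θ / 3 :=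
    (Measure.le_map_apply hξ₀_meas _).trans ((le_add_self.trans hμK.le).trans (min_le_right _ _))
  filter_upwards [ENNReal.tendsto_nhds_zero.1 (hξ r hr) _ hθ3] with i hi
  have hξK : P (ξ i ⁻¹' Kᶜ) ≤ θ / 3 :=
    (Measure.le_map_apply (hξ_meas i) _).trans (hsmall i _ hK.isClosed.measurableSet.compl hνK)
  have hbad : {ω | ε ≤ dist ((f ∘ ξ i) ω) ((f ∘ ξ₀) ω)} ⊆
      ξ i ⁻¹' Kᶜ ∪ ξ₀ ⁻¹' Kᶜ ∪ {ω | r ≤ dist (ξ i ω) (ξ₀ ω)} := by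
    intro ω hω
    by_contra hgood
    simp only [Set.mem_union, Set.mem_preimage, Set.mem_compl_iff, Set.mem_ofPred_eq, not_or,
      not_not, not_le] at hgood
    exact (hfr _ hgood.1.1 _ hgood.1.2 hgood.2).not_ge hω
  calc P {ω | ε ≤ dist ((f ∘ ξ i) ω) ((f ∘ ξ₀) ω)}
      ≤ P (ξ i ⁻¹' Kᶜ) + P (ξ₀ ⁻¹' Kᶜ) + P {ω | r ≤ dist (ξ i ω) (ξ₀ ω)} :=
        (measure_mono hbad).trans
          ((measure_union_le _ _).trans (by gcongr; exact measure_union_le _ _))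
    _ ≤ θ / 3 + θ / 3 + θ / 3 := by gcongr
    _ = θ := ENNReal.add_thirds θ

end RandomElements

end MeasureTheory

theorem comp_tendsto_in_probability_general
    {X Y Ω : Type*} [MetricSpace X] [CompleteSpace X] [SecondCountableTopology X]
    [MeasurableSpace X] [BorelSpace X]
    [MetricSpace Y] [SecondCountableTopology Y]
    [MeasurableSpace Y] [BorelSpace Y]
    [MeasurableSpace Ω] (P : Measure Ω) [IsProbabilityMeasure P]
    (ξ : ℕ → Ω → X) (h : ℕ → X → Y)
    (hξmeas : ∀ n, Measurable (ξ n)) (hhmeas : ∀ n, Measurable (h n))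
    (ν : Measure X) [IsProbabilityMeasure ν]
    (hξ : TendstoInMeasure P (fun n => ξ n) atTop (ξ 0))
    (hh : TendstoInMeasure ν (fun n => h n) atTop (h 0))
    (hac : ∀ n, 1 ≤ n → Measure.map (ξ n) P ≪ ν)
    (hui : UnifIntegrable
      (fun n x => ((Measure.map (ξ (n + 1)) P).rnDeriv ν x).toReal) 1 ν) :
    TendstoInMeasure P (fun n ω => h n (ξ n ω)) atTop (fun ω => h 0 (ξ 0 ω)) := by
  have huac : UniformlyAbsolutelyContinuous (fun n => P.map (ξ (n + 1))) ν :=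
    hui.uniformlyAbsolutelyContinuous fun n => hac (n + 1) (Nat.le_add_left 1 n)
  have hξ_meas : ∀ n, AEMeasurable (ξ (n + 1)) P := fun n => (hξmeas _).aemeasurable
  have hcomp : TendstoInMeasure P (fun n => h 0 ∘ ξ (n + 1)) atTop (h 0 ∘ ξ 0) :=
    ((tendstoInMeasure_add_atTop_iff_nat 1).2 hξ).comp_of_uniformlyAbsolutelyContinuous
      hξ_meas (hξmeas 0).aemeasurable (hhmeas 0) huac
  have hclose := ((tendstoInMeasure_add_atTop_iff_nat 1).2 hh).tendsto_measure_dist_comp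
    (fun n => hhmeas _) (hhmeas 0) hξ_meas huac
  exact (tendstoInMeasure_add_atTop_iff_nat 1).1 (hcomp.of_tendsto_measure_dist hclose)

/-- Kulik-type proposition: if `ξ n → ξ 0` in probability, `h n → h 0` in measure `ν`,
the distributions of `ξ n` (for `n ≥ 1`) are absolutely continuous w.r.t. `ν` with
uniformly integrable densities, then `h n (ξ n) → h 0 (ξ 0)` in probability. -/
theorem comp_tendsto_in_probability
    {X Y Ω : Type*} [MetricSpace X] [CompleteSpace X] [SecondCountableTopology X]
    [MeasurableSpace X] [BorelSpace X]
    [MetricSpace Y] [CompleteSpace Y] [SecondCountableTopology Y]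
    [MeasurableSpace Y] [BorelSpace Y]
    [MeasurableSpace Ω] (P : Measure Ω) [IsProbabilityMeasure P]
    (ξ : ℕ → Ω → X) (h : ℕ → X → Y)
    (hξmeas : ∀ n, Measurable (ξ n)) (hhmeas : ∀ n, Measurable (h n))
    (ν : Measure X) [IsProbabilityMeasure ν]
    (hξ : TendstoInMeasure P (fun n => ξ n) atTop (ξ 0))
    (hh : TendstoInMeasure ν (fun n => h n) atTop (h 0))
    (hac : ∀ n, 1 ≤ n → Measure.map (ξ n) P ≪ ν)
    (hui : UnifIntegrable
      (fun n x => ((Measure.map (ξ (n + 1)) P).rnDeriv ν x).toReal) 1 ν) :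
    TendstoInMeasure P (fun n ω => h n (ξ n ω)) atTop (fun ω => h 0 (ξ 0 ω)) :=
  comp_tendsto_in_probability_general P ξ h hξmeas hhmeas ν hξ hh hac hui
end

section
/- In dimension d = 1, if a measure μ on ℝ satisfies sup_{x∈ℝ} μ([x−1, x+1]) < ∞, then the measure ν(ds,dx) = μ(dx) ds on [0,∞)×ℝ satisfies lim_{t↓0} sup_{x₀∈ℝ} ∫₀ᵗ ∫_ℝ (2πs)^{−1/2} exp(−(y−x₀)²/(2s)) μ(dy) ds = 0. -/
/-!
For `s ≤ 1` the heat kernel `p_s(x₀, y)` is at most `s^{-1/2} e^{-(y - x₀)²/2}`. Cutting `ℝ` into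
the shells `n ≤ |y - x₀| < n + 1`, each covered by two unit intervals and so of `μ`-mass at most
`2C`, gives `∫ e^{-(y - x₀)²/2} μ(dy) ≤ 2C ∑ₙ e^{-n/2} ≤ 6C` uniformly in `x₀`. Since
`∫₀ᵗ s^{-1/2} ds = 2√t`, the space-time integral is at most `12 C √t`, which tends to `0`.
-/

open MeasureTheory Set Filter Topology Real
open scoped ENNReal

noncomputable def heatKernel (s x y : ℝ) : ℝ :=
  (√(2 * π * s))⁻¹ * exp (-(y - x) ^ 2 / (2 * s))

section UniformlyLocallyBounded

variable {μ : Measure ℝ} {C : ℝ≥0∞}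

lemma measure_setOf_floor_abs_sub_eq_le (hμ : ∀ x : ℝ, μ (Icc (x - 1) (x + 1)) ≤ C)
    (x₀ : ℝ) (n : ℕ) : μ {y | ⌊|y - x₀|⌋₊ = n} ≤ 2 * C := by
  have hsub : {y | ⌊|y - x₀|⌋₊ = n} ⊆
      Icc (x₀ - n - 1) (x₀ - n + 1) ∪ Icc (x₀ + n - 1) (x₀ + n + 1) := by
    intro y hy
    obtain ⟨hlo, hhi⟩ := (Nat.floor_eq_iff (abs_nonneg _)).1 hy
    rcases abs_cases (y - x₀) with ⟨h, -⟩ | ⟨h, -⟩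
    · right; constructor <;> linarith
    · left; constructor <;> linarith
  calc μ {y | ⌊|y - x₀|⌋₊ = n}
      ≤ μ (Icc (x₀ - n - 1) (x₀ - n + 1)) + μ (Icc (x₀ + n - 1) (x₀ + n + 1)) :=
        (measure_mono hsub).trans (measure_union_le _ _)
    _ ≤ C + C := add_le_add (hμ (x₀ - n)) (hμ (x₀ + n))
    _ = 2 * C := (two_mul C).symm

lemma exp_neg_sq_half_le_of_floor_abs_eq {u : ℝ} {n : ℕ} (hn : ⌊|u|⌋₊ = n) :
    exp (-u ^ 2 / 2) ≤ exp (-(1 / 2)) ^ n := by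
  have hnu : (n : ℝ) ≤ |u| := ((Nat.floor_eq_iff (abs_nonneg _)).1 hn).1
  have hnn : (n : ℝ) ≤ n ^ 2 := by exact_mod_cast Nat.le_self_pow two_ne_zero n
  have hsq : (n : ℝ) ^ 2 ≤ u ^ 2 := by
    rw [← sq_abs u]; exact pow_le_pow_left₀ n.cast_nonneg hnu 2
  rw [← exp_nat_mul]
  exact exp_le_exp.2 (by linarith)

lemma tsum_ofReal_exp_neg_half_pow_le :
    ∑' n : ℕ, ENNReal.ofReal (exp (-(1 / 2))) ^ n ≤ 3 := by
  have hr : exp (-(1 / 2)) ≤ 2 / 3 := by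
    rw [exp_neg, inv_le_comm₀ (exp_pos _) (by norm_num)]
    linarith [add_one_le_exp (1 / 2 : ℝ)]
  have hr1 : exp (-(1 / 2)) < 1 := by linarith
  simp_rw [← ENNReal.ofReal_pow (exp_nonneg _)]
  rw [← ENNReal.ofReal_tsum_of_nonneg (fun n => pow_nonneg (exp_nonneg _) n)
      (summable_geometric_of_lt_one (exp_nonneg _) hr1),
    tsum_geometric_of_lt_one (exp_nonneg _) hr1, ← ENNReal.ofReal_ofNat 3]
  refine ENNReal.ofReal_le_ofReal ?_
  rw [inv_le_comm₀ (by linarith) (by norm_num)]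
  linarith

lemma lintegral_exp_neg_sq_half_le (hμ : ∀ x : ℝ, μ (Icc (x - 1) (x + 1)) ≤ C) (x₀ : ℝ) :
    ∫⁻ y, ENNReal.ofReal (exp (-(y - x₀) ^ 2 / 2)) ∂μ ≤ 6 * C := by
  set r := ENNReal.ofReal (exp (-(1 / 2)))
  have hcover : ⋃ n : ℕ, {y : ℝ | ⌊|y - x₀|⌋₊ = n} = univ := by
    ext y; simp
  calc ∫⁻ y, ENNReal.ofReal (exp (-(y - x₀) ^ 2 / 2)) ∂μ
      = ∫⁻ y in ⋃ n : ℕ, {y : ℝ | ⌊|y - x₀|⌋₊ = n},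
          ENNReal.ofReal (exp (-(y - x₀) ^ 2 / 2)) ∂μ := by
        rw [hcover, Measure.restrict_univ]
    _ ≤ ∑' n : ℕ, ∫⁻ y in {y : ℝ | ⌊|y - x₀|⌋₊ = n},
          ENNReal.ofReal (exp (-(y - x₀) ^ 2 / 2)) ∂μ :=
        lintegral_iUnion_le _ _
    _ ≤ ∑' n : ℕ, ∫⁻ _ in {y : ℝ | ⌊|y - x₀|⌋₊ = n}, r ^ n ∂μ := by
        refine ENNReal.tsum_le_tsum fun n => setLIntegral_mono measurable_const fun y hy => ?_
        rw [← ENNReal.ofReal_pow (exp_nonneg _)]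
        exact ENNReal.ofReal_le_ofReal (exp_neg_sq_half_le_of_floor_abs_eq hy)
    _ ≤ ∑' n : ℕ, r ^ n * (2 * C) := by
        gcongr with n
        rw [setLIntegral_const]
        gcongr
        exact measure_setOf_floor_abs_sub_eq_le hμ x₀ n
    _ ≤ 3 * (2 * C) := by
        rw [ENNReal.tsum_mul_right]
        gcongr
        exact tsum_ofReal_exp_neg_half_pow_le
    _ = 6 * C := by rw [← mul_assoc]; norm_num

lemma lintegral_heatKernel_le (hμ : ∀ x : ℝ, μ (Icc (x - 1) (x + 1)) ≤ C) (x₀ : ℝ)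
    {s : ℝ} (hs : 0 < s) (hs1 : s ≤ 1) :
    ∫⁻ y, ENNReal.ofReal (heatKernel s x₀ y) ∂μ ≤ ENNReal.ofReal (√s)⁻¹ * (6 * C) := by
  have hpt : ∀ y, ENNReal.ofReal (heatKernel s x₀ y) ≤
      ENNReal.ofReal (√s)⁻¹ * ENNReal.ofReal (exp (-(y - x₀) ^ 2 / 2)) := fun y => by
    rw [← ENNReal.ofReal_mul (by positivity)]
    refine ENNReal.ofReal_le_ofReal (mul_le_mul ?_ ?_ (exp_nonneg _) (by positivity))
    · exact inv_anti₀ (sqrt_pos.2 hs) (sqrt_le_sqrt (by nlinarith [pi_gt_three]))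
    · refine exp_le_exp.2 ((div_le_div_iff₀ (by positivity) two_pos).2 ?_)
      nlinarith [sq_nonneg (y - x₀)]
  calc ∫⁻ y, ENNReal.ofReal (heatKernel s x₀ y) ∂μ
      ≤ ∫⁻ y, ENNReal.ofReal (√s)⁻¹ * ENNReal.ofReal (exp (-(y - x₀) ^ 2 / 2)) ∂μ :=
        lintegral_mono hpt
    _ = ENNReal.ofReal (√s)⁻¹ * ∫⁻ y, ENNReal.ofReal (exp (-(y - x₀) ^ 2 / 2)) ∂μ :=
        lintegral_const_mul' _ _ ENNReal.ofReal_ne_top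
    _ ≤ ENNReal.ofReal (√s)⁻¹ * (6 * C) := by
        gcongr; exact lintegral_exp_neg_sq_half_le hμ x₀

end UniformlyLocallyBounded

lemma lintegral_Ioc_inv_sqrt {t : ℝ} (ht : 0 ≤ t) :
    ∫⁻ s in Ioc 0 t, ENNReal.ofReal (√s)⁻¹ = ENNReal.ofReal (2 * √t) := by
  have hrpow : EqOn (fun s : ℝ => (√s)⁻¹) (fun s => s ^ (-(1 / 2) : ℝ)) (Ioc 0 t) :=
    fun s hs => by simp only [rpow_neg hs.1.le, sqrt_eq_rpow]
  have hint : IntegrableOn (fun s : ℝ => s ^ (-(1 / 2) : ℝ)) (Ioc 0 t) :=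
    (intervalIntegrable_iff_integrableOn_Ioc_of_le ht).1
      (intervalIntegral.intervalIntegrable_rpow' (by norm_num))
  rw [setLIntegral_congr_fun measurableSet_Ioc fun s hs => congrArg ENNReal.ofReal (hrpow hs),
    ← ofReal_integral_eq_lintegral_ofReal hint
      ((ae_restrict_mem measurableSet_Ioc).mono fun s hs => rpow_nonneg hs.1.le _),
    ← intervalIntegral.integral_of_le ht, integral_rpow (Or.inl (by norm_num)),
    zero_rpow (by norm_num), sqrt_eq_rpow]
  congr 1
  norm_num
  ring

/-- In dimension one, a measure `μ` with uniformly bounded mass on unit intervals gives rise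
to a measure `μ(dy) ds` of parabolic Kato class. -/
theorem kato_class_dim_one (μ : Measure ℝ)
    (C : ℝ≥0∞) (hC : C < ⊤) (hμ : ∀ x : ℝ, μ (Icc (x - 1) (x + 1)) ≤ C) :
    ∀ δ > (0:ℝ), ∃ t₁ > (0:ℝ), ∀ t, 0 < t → t ≤ t₁ → ∀ x₀ : ℝ,
      (∫⁻ s in Ioc (0:ℝ) t, ∫⁻ y,
        ENNReal.ofReal ((Real.sqrt (2 * Real.pi * s))⁻¹ *
          Real.exp (-(y - x₀)^2 / (2 * s))) ∂μ) ≤ ENNReal.ofReal δ := by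
  intro δ hδ
  have hlim : Tendsto (fun t => ENNReal.ofReal (2 * √t) * (6 * C)) (𝓝[>] 0) (𝓝 0) := by
    have hcont : Continuous fun t : ℝ => ENNReal.ofReal (2 * √t) :=
      ENNReal.continuous_ofReal.comp (continuous_const.mul continuous_sqrt)
    simpa using ENNReal.Tendsto.mul_const ((hcont.tendsto 0).mono_left nhdsWithin_le_nhds)
      (Or.inr (ENNReal.mul_ne_top (by simp) hC.ne))
  obtain ⟨t₁, hsmall, ht₁, ht₁_le_one⟩ :=
    ((hlim.eventually (gt_mem_nhds (ENNReal.ofReal_pos.2 hδ))).and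
      (Ioc_mem_nhdsGT one_pos)).exists
  refine ⟨t₁, ht₁, fun t _ ht x₀ => ?_⟩
  calc ∫⁻ s in Ioc 0 t, ∫⁻ y, ENNReal.ofReal (heatKernel s x₀ y) ∂μ
      ≤ ∫⁻ s in Ioc 0 t₁, ∫⁻ y, ENNReal.ofReal (heatKernel s x₀ y) ∂μ :=
        lintegral_mono_set (Ioc_subset_Ioc_right ht)
    _ ≤ ∫⁻ s in Ioc 0 t₁, ENNReal.ofReal (√s)⁻¹ * (6 * C) :=
        setLIntegral_mono (by fun_prop) fun s hs =>
          lintegral_heatKernel_le hμ x₀ hs.1 (hs.2.trans ht₁_le_one)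
    _ = ENNReal.ofReal (2 * √t₁) * (6 * C) := by
        rw [lintegral_mul_const _ (by fun_prop), lintegral_Ioc_inv_sqrt ht₁.le]
    _ ≤ ENNReal.ofReal δ := hsmall.le
end
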